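/- Fix an integer k ≥ 1. Let T be a random and/or tree shape (any probability distribution on the countable set of and/or tree shapes), and let T̂ be its uniform random k-labelling, performed independently of T. Then for every k-variable Boolean function f, C(k, Ess(f)) · P(f[T̂] = f) ≤ P(‖T‖ ≥ L(f)), where C(k, Ess(f)) is a binomial coefficient. -/

import Mathlib

/-- A plane rooted tree (shape of an and/or tree). -/
inductive PTree where
  | leaf : PTree
  | node : List PTree → PTree

/-- An and/or tree shape: every internal node has at least two children. -/
inductive IsShape : PTree → Prop
  | leaf : IsShape .leaf
  | node (cs : List PTree) : 2 ≤ cs.length → (∀ c ∈ cs, IsShape c) → IsShape (.node cs)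

/-- The size of a shape: its number of leaves. -/
def PTree.size : PTree → ℕ
  | .leaf => 1
  | .node cs => (cs.attach.map (fun ⟨c, _⟩ => c.size)).sum
decreasing_by
  have := List.sizeOf_lt_of_mem ‹c ∈ cs›; simp only [PTree.node.sizeOf_spec]; omega

/-- The saturation level of a shape: the minimal depth of a leaf. -/
def PTree.satLevel : PTree → ℕ
  | .leaf => 0
  | .node cs => ((cs.attach.map (fun ⟨c, _⟩ => c.satLevel)).min?.getD 0) + 1
decreasing_by
  have := List.sizeOf_lt_of_mem ‹c ∈ cs›; simp only [PTree.node.sizeOf_spec]; omega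

/-- A `k`-labelled and/or tree: internal nodes carry a connective
(`true` = ∧, `false` = ∨), leaves carry a literal: a variable index in `Fin k`
together with a polarity (`true` = positive, `false` = negated). -/
inductive LTree (k : ℕ) where
  | leaf : Fin k → Bool → LTree k
  | node : Bool → List (LTree k) → LTree k

/-- Evaluation of a labelled and/or tree, with the convention that a childless
internal node labelled ∧ (resp. ∨) evaluates to `false` (resp. `true`). -/
def LTree.eval {k : ℕ} : LTree k → (Fin k → Bool) → Bool
  | .leaf i pos, x => if pos then x i else !(x i)
  | .node c cs, x =>
    if cs.isEmpty then !c
    else if c then (cs.attach.map (fun ⟨t, _⟩ => t.eval x)).all (fun b => b)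
    else (cs.attach.map (fun ⟨t, _⟩ => t.eval x)).any (fun b => b)
decreasing_by
  all_goals (have := List.sizeOf_lt_of_mem ‹t ∈ cs›; simp only [LTree.node.sizeOf_spec]; omega)

/-- A valid labelled and/or tree: every internal node has at least two children. -/
inductive IsLShape {k : ℕ} : LTree k → Prop
  | leaf (i : Fin k) (pos : Bool) : IsLShape (.leaf i pos)
  | node (c : Bool) (cs : List (LTree k)) : 2 ≤ cs.length →
      (∀ t ∈ cs, IsLShape t) → IsLShape (.node c cs)

/-- The size of a labelled tree: its number of leaves. -/
def LTree.size {k : ℕ} : LTree k → ℕ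
  | .leaf _ _ => 1
  | .node _ cs => (cs.attach.map (fun ⟨t, _⟩ => t.size)).sum
decreasing_by
  have := List.sizeOf_lt_of_mem ‹t ∈ cs›; simp only [LTree.node.sizeOf_spec]; omega

/-- The list of leaf labels of a labelled tree. -/
def LTree.leaves {k : ℕ} : LTree k → List (Fin k × Bool)
  | .leaf i pos => [(i, pos)]
  | .node _ cs => (cs.attach.map (fun ⟨t, _⟩ => t.leaves)).flatten
decreasing_by
  have := List.sizeOf_lt_of_mem ‹t ∈ cs›; simp only [LTree.node.sizeOf_spec]; omega

/-- The list of all `k`-labellings of a given shape (each one equally likely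
under the uniform random labelling). -/
def labellings (k : ℕ) : PTree → List (LTree k)
  | .leaf => (List.finRange k).flatMap (fun i => [LTree.leaf i true, LTree.leaf i false])
  | .node cs => [true, false].flatMap (fun c =>
      ((cs.attach.map (fun ⟨t, _⟩ => labellings k t)).sections).map (fun l => LTree.node c l))
decreasing_by
  have := List.sizeOf_lt_of_mem ‹t ∈ cs›; simp only [PTree.node.sizeOf_spec]; omega

open Classical in
/-- The probability that the uniform random `k`-labelling of the shape `t`
computes a Boolean function belonging to the set `s`. -/
noncomputable def Pr (k : ℕ) (t : PTree) (s : Set ((Fin k → Bool) → Bool)) : ℝ :=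
  (((labellings k t).filter (fun τ => decide (τ.eval ∈ s))).length : ℝ)
    / ((labellings k t).length : ℝ)

/-- `Pfun k t g` = `P_k[t](g)`: the probability that the uniform random
`k`-labelling of the shape `t` computes exactly the Boolean function `g`. -/
noncomputable def Pfun (k : ℕ) (t : PTree) (g : (Fin k → Bool) → Bool) : ℝ :=
  Pr k t {g}

/-- `x_i` is an essential variable of `f`. -/
def Essential {k : ℕ} (f : (Fin k → Bool) → Bool) (i : Fin k) : Prop :=
  ∃ x : Fin k → Bool, f (Function.update x i true) ≠ f (Function.update x i false)

open Classical in
/-- The number of essential variables of `f`. -/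
noncomputable def essCount {k : ℕ} (f : (Fin k → Bool) → Bool) : ℕ :=
  (Finset.univ.filter (fun i => Essential f i)).card

open Classical in
/-- The complexity `L(f)`: the minimal number of leaves of a valid `k`-labelled
and/or tree computing `f`, with the convention `L(True) = L(False) = 0`. -/
noncomputable def complexity (k : ℕ) (f : (Fin k → Bool) → Bool) : ℕ :=
  if f = (fun _ => true) ∨ f = (fun _ => false) then 0
  else sInf {n | ∃ τ : LTree k, IsLShape τ ∧ τ.eval = f ∧ τ.size = n}

/-!
Renaming the variables along a permutation `σ` of `Fin k` permutes the labellings of every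
shape, so `f` and `x ↦ f (x ∘ σ)` are computed with the same probability. The essential set of
the renamed function is the image of that of `f` under `σ⁻¹`, and every subset of size `Ess(f)`
arises this way, so the orbit of `f` contains at least `C(k, Ess(f))` distinct, equally likely
functions, whose probabilities add up to at most one. On the other hand no labelling of a shape
with fewer than `L(f)` leaves computes `f`. Averaging over the random shape gives the bound.
-/

open Finset

section

variable {k : ℕ}

theorem PTree.size_node (cs : List PTree) : (PTree.node cs).size = (cs.map PTree.size).sum := by
  rw [PTree.size, List.map_attach_eq_pmap, List.pmap_eq_map]

namespace LTree

theorem eval_node (c : Bool) (cs : List (LTree k)) (x : Fin k → Bool) :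
    (node c cs).eval x = if cs.isEmpty then !c
      else if c then (cs.map (eval · x)).all id else (cs.map (eval · x)).any id := by
  rw [eval]; simp only [List.map_attach_eq_pmap, List.pmap_eq_map]; rfl

theorem size_node (c : Bool) (cs : List (LTree k)) : (node c cs).size = (cs.map size).sum := by
  rw [size, List.map_attach_eq_pmap, List.pmap_eq_map]

def relabel (σ : Fin k → Fin k) : LTree k → LTree k
  | .leaf i pos => .leaf (σ i) pos
  | .node c cs => .node c (cs.attach.map fun ⟨t, _⟩ => t.relabel σ)
decreasing_by
  have := List.sizeOf_lt_of_mem ‹t ∈ cs›; simp only [LTree.node.sizeOf_spec]; omega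

@[simp] theorem relabel_leaf (σ : Fin k → Fin k) (i : Fin k) (pos : Bool) :
    (leaf i pos).relabel σ = leaf (σ i) pos := by
  rw [relabel]

@[simp] theorem relabel_node (σ : Fin k → Fin k) (c : Bool) (cs : List (LTree k)) :
    (node c cs).relabel σ = node c (cs.map (relabel σ)) := by
  rw [relabel, List.map_attach_eq_pmap, List.pmap_eq_map]

theorem eval_relabel (σ : Fin k → Fin k) : ∀ τ : LTree k,
    (τ.relabel σ).eval = fun x => τ.eval (x ∘ σ)
  | .leaf i pos => by funext x; simp [eval]
  | .node c cs => by
    funext x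
    have hcs : cs.map (fun t => (t.relabel σ).eval x) = cs.map (eval · (x ∘ σ)) :=
      List.map_congr_left fun t _ => congrFun (eval_relabel σ t) x
    simp only [relabel_node, eval_node, List.map_map, Function.comp_def, hcs, List.isEmpty_map]
decreasing_by
  have := List.sizeOf_lt_of_mem ‹t ∈ cs›; simp only [LTree.node.sizeOf_spec]; omega

end LTree

theorem labellings_node (cs : List PTree) :
    labellings k (.node cs) = [true, false].flatMap fun c =>
      (cs.map (labellings k)).sections.map (LTree.node c) := by
  rw [labellings, List.map_attach_eq_pmap, List.pmap_eq_map]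

namespace List

theorem sections_map {α β : Type*} (g : α → β) : ∀ L : List (List α),
    (L.map (map g)).sections = L.sections.map (map g)
  | [] => rfl
  | l :: L => by
    simp only [map_cons, sections, sections_map g L, flatMap_map, map_flatMap, map_map,
      Function.comp_def]

theorem Forall₂.sections_perm {α : Type*} {L₁ L₂ : List (List α)}
    (h : Forall₂ Perm L₁ L₂) : L₁.sections.Perm L₂.sections := by
  induction h with
  | nil => exact .refl _
  | cons hl _ ih =>
    exact (ih.flatMap_right _).trans (Perm.flatMap_left _ fun s _ => hl.map _)

end List

theorem labellings_map_relabel_perm (σ : Equiv.Perm (Fin k)) : ∀ t : PTree,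
    ((labellings k t).map (LTree.relabel σ)).Perm (labellings k t)
  | .leaf => by
    rw [labellings, List.map_flatMap]
    simpa only [List.map_cons, List.map_nil, LTree.relabel_leaf, List.flatMap_map] using
      σ.map_finRange_perm.flatMap_right fun i => [LTree.leaf i true, LTree.leaf i false]
  | .node cs => by
    rw [labellings_node, List.map_flatMap]
    refine List.Perm.flatMap_left _ fun c _ => ?_
    rw [List.map_map, show LTree.relabel σ ∘ LTree.node c =
      LTree.node c ∘ List.map (LTree.relabel σ) from funext fun _ => LTree.relabel_node ..,
      ← List.map_map, ← List.sections_map, List.map_map]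
    refine (List.Forall₂.sections_perm ?_).map _
    rw [List.forall₂_map_left_iff, List.forall₂_map_right_iff, List.forall₂_same]
    exact fun t _ => labellings_map_relabel_perm σ t
decreasing_by
  have := List.sizeOf_lt_of_mem ‹t ∈ cs›; simp only [PTree.node.sizeOf_spec]; omega

theorem isLShape_and_size_eq_of_mem_labellings {t : PTree} (ht : IsShape t) :
    ∀ {τ : LTree k}, τ ∈ labellings k t → IsLShape τ ∧ τ.size = t.size := by
  induction ht with
  | leaf =>
    intro τ hτ
    simp only [labellings, List.mem_flatMap, List.mem_cons, List.not_mem_nil, or_false] at hτ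
    obtain ⟨i, -, rfl | rfl⟩ := hτ <;> exact ⟨.leaf _ _, by rw [LTree.size, PTree.size]⟩
  | node cs hlen _ ih =>
    intro τ hτ
    simp only [labellings_node, List.mem_flatMap, List.mem_map] at hτ
    obtain ⟨c, -, l, hl, rfl⟩ := hτ
    rw [List.mem_sections, List.forall₂_map_right_iff] at hl
    have hchildren : List.Forall₂ (fun τ t => IsLShape τ ∧ τ.size = t.size) l cs :=
      List.forall₂_iff_zip.2 ⟨hl.length_eq, fun hab =>
        ih _ (List.of_mem_zip hab).2 (List.forall₂_zip hl hab)⟩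
    obtain ⟨hshape, hsize⟩ := (List.forall₂_and_left _ _).1 hchildren
    refine ⟨.node c l (hl.length_eq ▸ hlen) hshape, ?_⟩
    have hsizes := List.forall₂_map_left_iff.2 (List.forall₂_map_right_iff.2 hsize)
    rw [List.forall₂_eq_eq_eq] at hsizes
    rw [LTree.size_node, PTree.size_node, hsizes]

theorem Pfun_eq_count (t : PTree) (g : (Fin k → Bool) → Bool) :
    Pfun k t g = ((labellings k t).map LTree.eval).count g / (labellings k t).length := by
  rw [Pfun, Pr, List.count_eq_countP, List.countP_map, List.countP_eq_length_filter]
  congr 4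
  funext τ
  rw [Bool.eq_iff_iff]
  simp

theorem Pfun_nonneg (t : PTree) (g : (Fin k → Bool) → Bool) : 0 ≤ Pfun k t g := by
  rw [Pfun_eq_count]
  positivity

theorem Pfun_comp_perm (σ : Equiv.Perm (Fin k)) (t : PTree) (g : (Fin k → Bool) → Bool) :
    Pfun k t (fun x => g (x ∘ σ)) = Pfun k t g := by
  let precomp : ((Fin k → Bool) → Bool) → (Fin k → Bool) → Bool := fun h x => h (x ∘ σ)
  have hinj : Function.Injective precomp :=
    σ.injective.surjective_comp_right.injective_comp_right
  have hperm := (labellings_map_relabel_perm σ t).map LTree.eval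
  rw [List.map_map, show LTree.eval ∘ LTree.relabel σ = precomp ∘ LTree.eval from
    funext (LTree.eval_relabel σ), ← List.map_map] at hperm
  rw [Pfun_eq_count, Pfun_eq_count, ← hperm.count_eq, List.count_map_of_injective _ _ hinj]

theorem List.sum_count_le_length {α : Type*} [DecidableEq α] (s : Finset α) (l : List α) :
    ∑ a ∈ s, l.count a ≤ l.length :=
  calc ∑ a ∈ s, l.count a ≤ ∑ a ∈ s ∪ l.toFinset, l.count a :=
        Finset.sum_le_sum_of_subset subset_union_left
    _ = l.length := by
      simpa using Multiset.sum_count_eq_card (s := s ∪ l.toFinset) (m := (l : Multiset α))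
        (by simp +contextual)

theorem sum_Pfun_le_one (t : PTree) (s : Finset ((Fin k → Bool) → Bool)) :
    ∑ g ∈ s, Pfun k t g ≤ 1 := by
  simp_rw [Pfun_eq_count, ← Finset.sum_div]
  refine div_le_one_of_le₀ ?_ (Nat.cast_nonneg _)
  exact_mod_cast (List.sum_count_le_length s _).trans (List.length_map _).le

theorem essential_comp_perm (σ : Equiv.Perm (Fin k)) (f : (Fin k → Bool) → Bool) (i : Fin k) :
    Essential (fun x => f (x ∘ σ)) i ↔ Essential f (σ.symm i) := by
  simp only [Essential, Function.update_comp_equiv]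
  exact ⟨fun ⟨x, hx⟩ => ⟨x ∘ σ, hx⟩,
    fun ⟨y, hy⟩ => ⟨y ∘ σ.symm, by simpa [Function.comp_assoc] using hy⟩⟩

open Classical in
noncomputable def essentialSet (f : (Fin k → Bool) → Bool) : Finset (Fin k) :=
  univ.filter (Essential f)

theorem card_essentialSet (f : (Fin k → Bool) → Bool) : #(essentialSet f) = essCount f := rfl

theorem essentialSet_comp_perm (σ : Equiv.Perm (Fin k)) (f : (Fin k → Bool) → Bool) :
    essentialSet (fun x => f (x ∘ σ)) = (essentialSet f).map σ.toEmbedding := by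
  ext i
  simp [essentialSet, Finset.mem_map_equiv, essential_comp_perm]

theorem Finset.exists_perm_map_eq {α : Type*} [Fintype α] [DecidableEq α] {s t : Finset α}
    (h : #s = #t) : ∃ σ : Equiv.Perm α, s.map σ.toEmbedding = t := by
  let e := s.equivOfCardEq h
  refine ⟨e.extendSubtype, Finset.ext fun a => ?_⟩
  rw [Finset.mem_map_equiv]
  by_cases ha : e.extendSubtype.symm a ∈ s
  · simpa [ha] using e.extendSubtype_mem _ ha
  · simpa [ha] using e.extendSubtype_not_mem _ ha

def permOrbit (f : (Fin k → Bool) → Bool) : Finset ((Fin k → Bool) → Bool) :=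
  univ.image fun σ : Equiv.Perm (Fin k) => fun x => f (x ∘ σ)

theorem choose_essCount_le_card_permOrbit (f : (Fin k → Bool) → Bool) :
    k.choose (essCount f) ≤ #(permOrbit f) := by
  have hsurj : Set.SurjOn essentialSet (permOrbit f : Set _)
      (powersetCard (essCount f) (univ : Finset (Fin k)) : Set (Finset (Fin k))) := by
    intro A hA
    rw [Finset.mem_coe, Finset.mem_powersetCard] at hA
    obtain ⟨σ, hσ⟩ := Finset.exists_perm_map_eq (hA.2.symm ▸ card_essentialSet f)
    exact ⟨_, Finset.mem_image_of_mem _ (Finset.mem_univ σ),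
      by rw [essentialSet_comp_perm, hσ]⟩
  simpa using Finset.card_le_card_of_surjOn essentialSet hsurj

theorem Pfun_eq_of_mem_permOrbit (t : PTree) {f g : (Fin k → Bool) → Bool}
    (hg : g ∈ permOrbit f) : Pfun k t g = Pfun k t f := by
  obtain ⟨σ, -, rfl⟩ := Finset.mem_image.1 hg
  exact Pfun_comp_perm σ t f

theorem choose_essCount_mul_Pfun_le_one (t : PTree) (f : (Fin k → Bool) → Bool) :
    (k.choose (essCount f) : ℝ) * Pfun k t f ≤ 1 :=
  calc (k.choose (essCount f) : ℝ) * Pfun k t f ≤ #(permOrbit f) * Pfun k t f := by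
        gcongr
        · exact Pfun_nonneg t f
        · exact_mod_cast choose_essCount_le_card_permOrbit f
    _ = ∑ g ∈ permOrbit f, Pfun k t g := by
        rw [Finset.sum_congr rfl fun g => Pfun_eq_of_mem_permOrbit t, sum_const, nsmul_eq_mul]
    _ ≤ 1 := sum_Pfun_le_one t (permOrbit f)

theorem complexity_eval_le_size {τ : LTree k} (hτ : IsLShape τ) :
    complexity k τ.eval ≤ τ.size := by
  rw [complexity]
  split_ifs
  · exact Nat.zero_le _
  · exact Nat.sInf_le ⟨τ, hτ, rfl, rfl⟩

theorem Pfun_eq_zero_of_size_lt_complexity {t : PTree} (ht : IsShape t)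
    {f : (Fin k → Bool) → Bool} (hlt : t.size < complexity k f) : Pfun k t f = 0 := by
  rw [Pfun_eq_count, List.count_eq_zero.2, Nat.cast_zero, zero_div]
  simp only [List.mem_map, not_exists, not_and]
  rintro τ hτ rfl
  obtain ⟨hshape, hsize⟩ := isLShape_and_size_eq_of_mem_labellings ht hτ
  exact hlt.not_ge (hsize ▸ complexity_eval_le_size hshape)

theorem choose_essCount_mul_Pfun_le {t : PTree} (ht : IsShape t) (f : (Fin k → Bool) → Bool) :
    (k.choose (essCount f) : ℝ) * Pfun k t f ≤ if complexity k f ≤ t.size then 1 else 0 := by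
  split_ifs with h
  · exact choose_essCount_mul_Pfun_le_one t f
  · rw [Pfun_eq_zero_of_size_lt_complexity ht (not_le.1 h), mul_zero]

end

theorem random_shape_symmetry_bound_general (k : ℕ) (w : PTree → ℝ)
    (hw0 : ∀ t, 0 ≤ w t) (hw1 : HasSum w 1)
    (hsupp : ∀ t, w t ≠ 0 → IsShape t) (f : (Fin k → Bool) → Bool) :
    (k.choose (essCount f) : ℝ) * (∑' t : PTree, w t * Pfun k t f)
      ≤ ∑' t : PTree, (if complexity k f ≤ t.size then w t else 0) := by
  set C : ℝ := (k.choose (essCount f) : ℝ)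
  set tail : PTree → ℝ := fun t => if complexity k f ≤ t.size then w t else 0
  have htail_nonneg : ∀ t, 0 ≤ tail t := fun t => by
    simp only [tail]; split_ifs <;> simp [hw0 t]
  have hpoint : ∀ t, C * (w t * Pfun k t f) ≤ tail t := fun t => by
    rcases eq_or_ne (w t) 0 with hw | hw
    · simpa [hw] using htail_nonneg t
    · calc C * (w t * Pfun k t f) = w t * (C * Pfun k t f) := by ring
        _ ≤ w t * (if complexity k f ≤ t.size then 1 else 0) :=
          mul_le_mul_of_nonneg_left (choose_essCount_mul_Pfun_le (hsupp t hw) f) (hw0 t)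
        _ = tail t := by simp only [tail, mul_ite, mul_one, mul_zero]
  have htail : Summable tail := hw1.summable.of_nonneg_of_le htail_nonneg fun t => by
    simp only [tail]; split_ifs <;> simp [hw0 t]
  have hlhs : Summable fun t => C * (w t * Pfun k t f) :=
    htail.of_nonneg_of_le
      (fun t => mul_nonneg (Nat.cast_nonneg _) (mul_nonneg (hw0 t) (Pfun_nonneg t f))) hpoint
  rw [← tsum_mul_left]
  exact hlhs.tsum_le_tsum hpoint htail

/-- Fix `k ≥ 1`. Let `T` be a random and/or tree shape with
distribution given by the weights `w` (nonnegative, summing to 1, supported on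
shapes), labelled uniformly at random and independently of `T`. Then for every
`k`-variable Boolean function `f`,
`C(k, Ess(f)) · P(f[T̂] = f) ≤ P(‖T‖ ≥ L(f))`. -/
theorem random_shape_symmetry_bound (k : ℕ) (hk : 1 ≤ k) (w : PTree → ℝ)
    (hw0 : ∀ t, 0 ≤ w t) (hw1 : HasSum w 1)
    (hsupp : ∀ t, w t ≠ 0 → IsShape t) (f : (Fin k → Bool) → Bool) :
    (k.choose (essCount f) : ℝ) * (∑' t : PTree, w t * Pfun k t f)
      ≤ ∑' t : PTree, (if complexity k f ≤ t.size then w t else 0) :=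
  random_shape_symmetry_bound_general k w hw0 hw1 hsupp f
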